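/- Let y be a complex number with 0 < |y| < 1. Then z := y/(1 + √(1 − |y|²)) satisfies |z| < 1 and ρ(0,z) = ρ(z,y) = ρ(0,y)/2; that is, z is the hyperbolic midpoint of the hyperbolic segment from 0 to y. -/

import Mathlib

open Complex

/-- The hyperbolic distance in the unit disk. -/
noncomputable def hypDist (x y : ℂ) : ℝ :=
  2 * Real.arsinh (‖x - y‖ /
    Real.sqrt ((1 - ‖x‖ ^ 2) * (1 - ‖y‖ ^ 2)))

/-!
With `r = |y|` and `s = √(1 - r²)` we have `y = (1 + s) z`, so `z - y = -s z`; the factor `s`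
then cancels against `√(1 - |y|²)` and gives `ρ(z, y) = ρ(0, z)`. From the origin,
`ρ(0, w) = 2 arsinh (|w| / √(1 - |w|²))`, and the doubling formula `sinh 2a = 2 sinh a cosh a`
turns `2 ρ(0, z) = ρ(0, y)` into the identity `2 |z| / (1 - |z|²) = r / s`.
-/

open Real

theorem Real.two_mul_arsinh_div_sqrt_one_sub_sq {w : ℝ} (hw : w ^ 2 < 1) :
    2 * arsinh (w / √(1 - w ^ 2)) = arsinh (2 * w / (1 - w ^ 2)) := by
  have hpos : 0 < 1 - w ^ 2 := by linarith
  have hsqrt : √(1 - w ^ 2) ^ 2 = 1 - w ^ 2 := sq_sqrt hpos.le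
  have hcosh : √(1 + (w / √(1 - w ^ 2)) ^ 2) = (√(1 - w ^ 2))⁻¹ := by
    rw [← sqrt_inv, div_pow, hsqrt]
    congr 1
    field_simp
    ring
  rw [← arsinh_sinh (2 * arsinh _), sinh_two_mul, sinh_arsinh, cosh_arsinh, hcosh, mul_assoc,
    div_mul_eq_mul_div, ← div_eq_mul_inv, div_div, ← sq, hsqrt, mul_div_assoc]

theorem hypDist_zero_left (z : ℂ) : hypDist 0 z = 2 * arsinh (‖z‖ / √(1 - ‖z‖ ^ 2)) := by
  simp [hypDist]

theorem hypDist_eq_hypDist_zero_of_norm_sub_eq {y z : ℂ} {s : ℝ} (hs : 0 < s)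
    (hzy : ‖z - y‖ = s * ‖z‖) (hy : 1 - ‖y‖ ^ 2 = s ^ 2) : hypDist z y = hypDist 0 z := by
  rw [hypDist_zero_left, hypDist, hzy, hy, sqrt_mul' _ (sq_nonneg s), sqrt_sq hs.le,
    mul_comm s, mul_div_mul_right _ _ hs.ne']

theorem two_mul_div_one_sub_sq_of_sq_add_sq {r s : ℝ} (hs : 0 < s) (hrs : r ^ 2 + s ^ 2 = 1) :
    2 * (r / (1 + s)) / (1 - (r / (1 + s)) ^ 2) = r / s := by
  have h1s : 1 + s ≠ 0 := by positivity
  have hden : (1 + s) ^ 2 - r ^ 2 = 2 * s * (1 + s) := by linear_combination -hrs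
  rw [div_pow, one_sub_div (pow_ne_zero 2 h1s), hden]
  field_simp

theorem hyperbolic_midpoint_from_origin_general (y : ℂ)
    (hy : ‖y‖ < 1) :
    let z := y / (((1 + Real.sqrt (1 - ‖y‖ ^ 2) : ℝ)) : ℂ)
    ‖z‖ < 1 ∧ hypDist 0 z = hypDist z y ∧ hypDist 0 z = hypDist 0 y / 2 := by
  intro z
  set r := ‖y‖
  set s := √(1 - r ^ 2)
  have hs2 : s ^ 2 = 1 - r ^ 2 := sq_sqrt (by nlinarith [norm_nonneg y])
  have hs : 0 < s := sqrt_pos.mpr (by nlinarith [norm_nonneg y])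
  have h1s : ((1 + s : ℝ) : ℂ) ≠ 0 := ofReal_ne_zero.mpr (by positivity)
  have hz : ‖z‖ = r / (1 + s) := by
    rw [norm_div, norm_real, norm_of_nonneg (by positivity)]
  have hz1 : ‖z‖ < 1 := by
    rw [hz, div_lt_one (by positivity)]
    linarith
  have hzy : ‖z - y‖ = s * ‖z‖ := by
    have hyz : y = (1 + s : ℝ) * z := (mul_div_cancel₀ y h1s).symm
    have hsub : z - y = -(s : ℂ) * z := by
      rw [hyz]
      push_cast
      ring
    rw [hsub, norm_mul, norm_neg, norm_real, norm_of_nonneg hs.le]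
  refine ⟨hz1, (hypDist_eq_hypDist_zero_of_norm_sub_eq hs hzy hs2.symm).symm, ?_⟩
  rw [eq_div_iff two_ne_zero, hypDist_zero_left, hypDist_zero_left, mul_comm _ 2,
    two_mul_arsinh_div_sqrt_one_sub_sq (by nlinarith [norm_nonneg z]), hz,
    two_mul_div_one_sub_sq_of_sq_add_sq hs (by linarith)]

/-- For `0 < |y| < 1`, the point `z = y/(1 + √(1 − |y|²))` is the hyperbolic
midpoint of the hyperbolic segment from `0` to `y`. -/
theorem hyperbolic_midpoint_from_origin (y : ℂ)
    (hy0 : 0 < ‖y‖) (hy : ‖y‖ < 1) :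
    let z := y / (((1 + Real.sqrt (1 - ‖y‖ ^ 2) : ℝ)) : ℂ)
    ‖z‖ < 1 ∧ hypDist 0 z = hypDist z y ∧ hypDist 0 z = hypDist 0 y / 2 :=
  hyperbolic_midpoint_from_origin_general y hy
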